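/- arXiv:1205.0101 — 3 statements merged into one kernel-verified Lean document; each statement's English description precedes it below -/
import Mathlib

section
/- Let (T, κ) be a monoidal monad on a monoidal category C such that C^T has tensors. Then for all T-algebras (A,a), (B,b), (C,c) there is a bijection between the set of bimorphisms A ⊗ B → C and the set of C^T-morphisms A ⊠ B → C, natural in each of the three variables. -/
open CategoryTheory Category MonoidalCategory Limits

universe v u

variable {C : Type u} [Category.{v} C] [MonoidalCategory C]

/-- A monoidal-monad structure on a monad `T`: a natural family
`κ X Y : T X ⊗ T Y ⟶ T (X ⊗ Y)` making `(T, η_E, κ)` a monoidal functor and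
compatible with the multiplication and unit of the monad. -/
structure MonoidalMonadStr (T : Monad C) where
  κ : ∀ X Y : C, T.obj X ⊗ T.obj Y ⟶ T.obj (X ⊗ Y)
  natural : ∀ {X Y X' Y' : C} (f : X ⟶ X') (g : Y ⟶ Y'),
      (T.map f ⊗ₘ T.map g) ≫ κ X' Y' = κ X Y ≫ T.map (f ⊗ₘ g)
  assoc : ∀ X Y Z : C,
      (α_ (T.obj X) (T.obj Y) (T.obj Z)).hom ≫ (𝟙 (T.obj X) ⊗ₘ κ Y Z) ≫ κ X (Y ⊗ Z)
        = (κ X Y ⊗ₘ 𝟙 (T.obj Z)) ≫ κ (X ⊗ Y) Z ≫ T.map (α_ X Y Z).hom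
  left_unit : ∀ X : C,
      (T.η.app (𝟙_ C) ⊗ₘ 𝟙 (T.obj X)) ≫ κ (𝟙_ C) X ≫ T.map (λ_ X).hom = (λ_ (T.obj X)).hom
  right_unit : ∀ X : C,
      (𝟙 (T.obj X) ⊗ₘ T.η.app (𝟙_ C)) ≫ κ X (𝟙_ C) ≫ T.map (ρ_ X).hom = (ρ_ (T.obj X)).hom
  mu : ∀ X Y : C,
      κ (T.obj X) (T.obj Y) ≫ T.map (κ X Y) ≫ T.μ.app (X ⊗ Y)
        = (T.μ.app X ⊗ₘ T.μ.app Y) ≫ κ X Y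
  unit : ∀ X Y : C, (T.η.app X ⊗ₘ T.η.app Y) ≫ κ X Y = T.η.app (X ⊗ Y)


/-- The Kleisli extension `μ · T g : T X ⟶ T Y` of `g : X ⟶ T Y`, as a morphism of
free `T`-algebras. -/
def freeHom (T : Monad C) {X Y : C} (g : X ⟶ T.obj Y) :
    (Monad.free T).obj X ⟶ (Monad.free T).obj Y where
  f := T.map g ≫ T.μ.app Y
  h := by
    show T.map (T.map g ≫ T.μ.app Y) ≫ T.μ.app Y = T.μ.app X ≫ T.map g ≫ T.μ.app Y
    rw [Functor.map_comp, Category.assoc, T.assoc Y, ← Category.assoc, ← Category.assoc]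
    congr 1
    exact T.μ.naturality g

/-- The transpose `c · T f : T X ⟶ C` of `f : X ⟶ C`, as a morphism from the free
`T`-algebra on `X` to the algebra `(C, c)`. -/
def transHom (T : Monad C) {X : C} {Cc : Monad.Algebra T} (f : X ⟶ Cc.A) :
    (Monad.free T).obj X ⟶ Cc where
  f := T.map f ≫ Cc.a
  h := by
    show T.map (T.map f ≫ Cc.a) ≫ Cc.a = T.μ.app X ≫ T.map f ≫ Cc.a
    rw [Functor.map_comp, Category.assoc, ← Cc.assoc, ← Category.assoc, ← Category.assoc]
    congr 1
    exact T.μ.naturality f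

/-- `f : A ⊗ B ⟶ C` is a bimorphism of `T`-algebras. -/
def IsBimorphism {T : Monad C} (κ : MonoidalMonadStr T) {A B Cc : Monad.Algebra T}
    (f : A.A ⊗ B.A ⟶ Cc.A) : Prop :=
  κ.κ A.A B.A ≫ T.map f ≫ Cc.a = (A.a ⊗ₘ B.a) ≫ f

/-! The transpose `f ↦ c · T f` is the hom-equivalence of the free–forgetful adjunction, so it
identifies maps `A ⊗ B ⟶ C` with algebra maps `T (A ⊗ B) ⟶ C`, and by the Kleisli law a map is a
bimorphism exactly when its transpose coequalizes `μ · T κ` and `T (a ⊗ b)`. The universal property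
of the coequalizer `q_{A,B}` turns this into the bijection, and naturality of the hom-equivalence
gives its naturality. -/

section

variable {D : Type*} [Category D] {T : Monad D}

lemma transHom_eq_adj_homEquiv_symm {X : D} {Cc : Monad.Algebra T} (f : X ⟶ Cc.A) :
    transHom T f = ((Monad.adj T).homEquiv X Cc).symm f := by
  ext
  simp only [transHom, Monad.adj, Adjunction.mkOfHomEquiv_homEquiv, Equiv.symm_mk,
    Equiv.coe_fn_mk]
  rfl

lemma transHom_injective {X : D} {Cc : Monad.Algebra T} :
    Function.Injective (transHom T : (X ⟶ Cc.A) → _) := fun f g hfg =>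
  ((Monad.adj T).homEquiv X Cc).symm.injective <| by
    rwa [transHom_eq_adj_homEquiv_symm, transHom_eq_adj_homEquiv_symm] at hfg

lemma freeHom_comp {X Y : D} {Cc : Monad.Algebra T} (g : X ⟶ T.obj Y)
    (p : (Monad.free T).obj Y ⟶ Cc) : freeHom T g ≫ p = transHom T (g ≫ p.f) := by
  ext
  exact (assoc _ _ _).trans ((whisker_eq (T.map g) p.h.symm).trans
    (T.map_comp_assoc g p.f Cc.a).symm)

lemma free_map_comp_transHom {X Y : D} {Cc : Monad.Algebra T} (h : X ⟶ Y) (f : Y ⟶ Cc.A) :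
    (Monad.free T).map h ≫ transHom T f = transHom T (h ≫ f) := by
  ext
  show T.map h ≫ T.map f ≫ Cc.a = T.map (h ≫ f) ≫ Cc.a
  rw [Functor.map_comp_assoc]

end

section

variable {T : Monad C} (κ : MonoidalMonadStr T)

lemma isBimorphism_iff {A B Cc : Monad.Algebra T} (f : A.A ⊗ B.A ⟶ Cc.A) :
    IsBimorphism κ f ↔
      freeHom T (κ.κ A.A B.A) ≫ transHom T f = (Monad.free T).map (A.a ⊗ₘ B.a) ≫ transHom T f := by
  rw [freeHom_comp, free_map_comp_transHom, transHom_injective.eq_iff]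
  rfl

section

variable {A B P : Monad.Algebra T} {q : (Monad.free T).obj (A.A ⊗ B.A) ⟶ P}
  {w : freeHom T (κ.κ A.A B.A) ≫ q = (Monad.free T).map (A.a ⊗ₘ B.a) ≫ q}

def bimorphismEquivOfIsColimit (hq : IsColimit (Cofork.ofπ q w)) (Cc : Monad.Algebra T) :
    {f : A.A ⊗ B.A ⟶ Cc.A // IsBimorphism κ f} ≃ (P ⟶ Cc) :=
  (((Monad.adj T).homEquiv _ Cc).symm.subtypeEquiv fun f =>
    transHom_eq_adj_homEquiv_symm f ▸ isBimorphism_iff κ f).trans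
    (Cofork.IsColimit.homIso hq Cc).symm

lemma comp_bimorphismEquivOfIsColimit (hq : IsColimit (Cofork.ofπ q w)) {Cc : Monad.Algebra T}
    (f : {f : A.A ⊗ B.A ⟶ Cc.A // IsBimorphism κ f}) :
    q ≫ bimorphismEquivOfIsColimit κ hq Cc f = transHom T f.1 :=
  (Cofork.IsColimit.π_desc' hq _ _).trans (transHom_eq_adj_homEquiv_symm f.1).symm

lemma bimorphismEquivOfIsColimit_symm_apply_coe (hq : IsColimit (Cofork.ofπ q w))
    {Cc : Monad.Algebra T} (m : P ⟶ Cc) :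
    ((bimorphismEquivOfIsColimit κ hq Cc).symm m).1 = (Monad.adj T).homEquiv _ Cc (q ≫ m) :=
  rfl

lemma bimorphismEquivOfIsColimit_symm_comp {A' B' P' : Monad.Algebra T}
    {q' : (Monad.free T).obj (A'.A ⊗ B'.A) ⟶ P'}
    {w' : freeHom T (κ.κ A'.A B'.A) ≫ q' = (Monad.free T).map (A'.a ⊗ₘ B'.a) ≫ q'}
    (hq : IsColimit (Cofork.ofπ q w)) (hq' : IsColimit (Cofork.ofπ q' w'))
    {u : A.A ⊗ B.A ⟶ A'.A ⊗ B'.A} {t : P ⟶ P'} (ht : q ≫ t = (Monad.free T).map u ≫ q')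
    {Cc Cc' : Monad.Algebra T} (m : P' ⟶ Cc) (k : Cc ⟶ Cc') :
    ((bimorphismEquivOfIsColimit κ hq Cc').symm (t ≫ m ≫ k)).1
      = u ≫ ((bimorphismEquivOfIsColimit κ hq' Cc).symm m).1 ≫ k.f := by
  rw [bimorphismEquivOfIsColimit_symm_apply_coe, bimorphismEquivOfIsColimit_symm_apply_coe,
    reassoc_of% ht, Adjunction.homEquiv_naturality_left, ← assoc,
    Adjunction.homEquiv_naturality_right]
  rfl

end

end

/-- when `C^T` has tensors, there is a bijection
`C^T(A,B;C) ≅ C^T(A ⊠ B, C)` between bimorphisms and morphisms out of the tensor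
product, natural in all three variables. -/
theorem bimorphism_equiv_hom_from_tensor
    (T : Monad C) (κ : MonoidalMonadStr T)
    -- `C^T` has tensors: a choice of coequalizers `q_{A,B} : T(A⊗B) ⟶ A ⊠ B`
    (tens : Monad.Algebra T → Monad.Algebra T → Monad.Algebra T)
    (q : ∀ A B : Monad.Algebra T, (Monad.free T).obj (A.A ⊗ B.A) ⟶ tens A B)
    (w : ∀ A B : Monad.Algebra T,
        freeHom T (κ.κ A.A B.A) ≫ q A B = (Monad.free T).map (A.a ⊗ₘ B.a) ≫ q A B)
    (hq : ∀ A B : Monad.Algebra T, Nonempty (IsColimit (Cofork.ofπ (q A B) (w A B))))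
    -- the functorial action of the tensor, induced by the universal property
    (tmap : ∀ {A A' B B' : Monad.Algebra T},
        (A ⟶ A') → (B ⟶ B') → (tens A B ⟶ tens A' B'))
    (htmap : ∀ {A A' B B' : Monad.Algebra T} (g : A ⟶ A') (h : B ⟶ B'),
        q A B ≫ tmap g h = (Monad.free T).map (g.f ⊗ₘ h.f) ≫ q A' B') :
    ∃ e : ∀ A B Cc : Monad.Algebra T,
        {f : A.A ⊗ B.A ⟶ Cc.A // IsBimorphism κ f} ≃ (tens A B ⟶ Cc),
      -- the bijection is implemented by the coequalizer
      (∀ (A B Cc : Monad.Algebra T) (f : {f : A.A ⊗ B.A ⟶ Cc.A // IsBimorphism κ f}),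
          q A B ≫ e A B Cc f = transHom T f.1) ∧
      -- naturality in each of the three variables
      (∀ (A A' B B' Cc Cc' : Monad.Algebra T) (g : A ⟶ A') (h : B ⟶ B')
          (k : Cc ⟶ Cc') (m : tens A' B' ⟶ Cc),
          ((e A B Cc').symm (tmap g h ≫ m ≫ k)).1
            = (g.f ⊗ₘ h.f) ≫ ((e A' B' Cc).symm m).1 ≫ k.f) := by
  exact ⟨fun A B => bimorphismEquivOfIsColimit κ (hq A B).some,
    fun A B Cc => comp_bimorphismEquivOfIsColimit κ (hq A B).some,
    fun A A' B B' Cc Cc' g h k m => bimorphismEquivOfIsColimit_symm_comp κ _ _ (htmap g h) m k⟩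
end

section
/- Let (T, κ) be a monoidal monad on a monoidal category C. For all objects A, B of C: (1) the pair (μ_{A⊗B}·Tκ_{A,B}, T(μ_A⊗μ_B)) : T(TTA⊗TTB) ⇉ T(TA⊗TB) has coequalizer μ_{A⊗B}·Tκ_{A,B} : T(TA⊗TB) → T(A⊗B) in C^T; (2) for C-morphisms f : A → A' and g : B → B', T(f⊗g) is the unique C^T-morphism satisfying T(f⊗g)·(μ·Tκ) = (μ·Tκ)·T(Tf⊗Tg). Consequently, the tensor of free T-algebras satisfies TA ⊠ TB ≅ T(A⊗B) with q_{TA,TB} = μ_{A⊗B}·Tκ_{A,B}. -/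
open CategoryTheory Category MonoidalCategory Limits

universe v u

variable {C : Type u} [Category.{v} C] [MonoidalCategory C]

/-! The fork `(μ·Tκ_{TA,TB}, T(μ⊗μ))` with cofork map `π = μ·Tκ_{A,B}` is split, by
`s = T(η⊗η)` and `t = T(Tη⊗Tη)`: the unit and multiplication axioms of `κ` give
`s ≫ π = 𝟙` and `t ≫ T(μ⊗μ) = 𝟙`, and naturality of `κ` gives `π ≫ s = t ≫ μ·Tκ`.
Hence it is a coequalizer, and `π` is a split epimorphism, which forces the uniqueness in (2). -/

section Kleisli

variable (T : Monad C)

omit [MonoidalCategory C] in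
lemma free_map_comp_freeHom {X Y Z : C} (f : X ⟶ Y) (g : Y ⟶ T.obj Z) :
    (Monad.free T).map f ≫ freeHom T g = freeHom T (f ≫ g) := by
  ext; exact (T.map_comp_assoc f g _).symm

omit [MonoidalCategory C] in
lemma freeHom_comp_free_map {X Y Z : C} (g : X ⟶ T.obj Y) (f : Y ⟶ Z) :
    freeHom T g ≫ (Monad.free T).map f = freeHom T (g ≫ T.map f) := by
  ext
  show (T.map g ≫ T.μ.app Y) ≫ T.map f = T.map (g ≫ T.map f) ≫ T.μ.app Z
  rw [assoc, ← T.μ.naturality, T.map_comp_assoc]; rfl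

omit [MonoidalCategory C] in
lemma freeHom_comp_freeHom {X Y Z : C} (g : X ⟶ T.obj Y) (h : Y ⟶ T.obj Z) :
    freeHom T g ≫ freeHom T h = freeHom T (g ≫ (freeHom T h).f) := by
  ext
  show (T.map g ≫ T.μ.app Y) ≫ T.map h ≫ T.μ.app Z
    = T.map (g ≫ T.map h ≫ T.μ.app Z) ≫ T.μ.app Z
  rw [assoc, ← T.μ.naturality_assoc, ← T.assoc]
  simp only [Functor.map_comp, assoc]; rfl

omit [MonoidalCategory C] in
lemma freeHom_unit (X : C) : freeHom T (T.η.app X) = 𝟙 ((Monad.free T).obj X) := by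
  ext; exact T.right_unit X

end Kleisli

namespace MonoidalMonadStr

variable {T : Monad C} (κ : MonoidalMonadStr T)

lemma freeHom_κ_comp_free_map {A B A' B' : C} (f : A ⟶ A') (g : B ⟶ B') :
    freeHom T (κ.κ A B) ≫ (Monad.free T).map (f ⊗ₘ g)
      = (Monad.free T).map (T.map f ⊗ₘ T.map g) ≫ freeHom T (κ.κ A' B') := by
  rw [freeHom_comp_free_map, free_map_comp_freeHom, κ.natural]

lemma freeHom_κ_comp_freeHom_κ (A B : C) :
    freeHom T (κ.κ (T.obj A) (T.obj B)) ≫ freeHom T (κ.κ A B)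
      = (Monad.free T).map (T.μ.app A ⊗ₘ T.μ.app B) ≫ freeHom T (κ.κ A B) := by
  rw [freeHom_comp_freeHom, free_map_comp_freeHom, ← κ.mu]; rfl

lemma free_map_unit_comp_freeHom_κ (A B : C) :
    (Monad.free T).map (T.η.app A ⊗ₘ T.η.app B) ≫ freeHom T (κ.κ A B)
      = 𝟙 ((Monad.free T).obj (A ⊗ B)) := by
  rw [free_map_comp_freeHom, κ.unit, freeHom_unit]

def freeHomIsSplitCoequalizer (A B : C) :
    IsSplitCoequalizer (freeHom T (κ.κ (T.obj A) (T.obj B)))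
      ((Monad.free T).map (T.μ.app A ⊗ₘ T.μ.app B)) (freeHom T (κ.κ A B)) where
  rightSection := (Monad.free T).map (T.η.app A ⊗ₘ T.η.app B)
  leftSection := (Monad.free T).map (T.map (T.η.app A) ⊗ₘ T.map (T.η.app B))
  condition := κ.freeHom_κ_comp_freeHom_κ A B
  rightSection_π := κ.free_map_unit_comp_freeHom_κ A B
  leftSection_bottom := by
    rw [← Functor.map_comp, tensorHom_comp_tensorHom]
    simp
  leftSection_top := (κ.freeHom_κ_comp_free_map _ _).symm

instance epi_freeHom_κ (A B : C) : Epi (freeHom T (κ.κ A B)) :=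
  SplitEpi.epi ⟨_, κ.free_map_unit_comp_freeHom_κ A B⟩

end MonoidalMonadStr

/-- the morphism `μ·Tκ : T(TA⊗TB) ⟶ T(A⊗B)` coequalizes (in `C^T`)
the pair `(μ·Tκ, T(μ⊗μ))`, `T(f⊗g)` is the unique morphism compatible with these
coequalizers, and consequently `TA ⊠ TB ≅ T(A⊗B)` with `q_{TA,TB} = μ·Tκ`. -/
theorem tensor_of_free_algebras (T : Monad C) (κ : MonoidalMonadStr T) (A B : C) :
    -- (1) the coequalizer diagram
    (∃ w : freeHom T (κ.κ (T.obj A) (T.obj B)) ≫ freeHom T (κ.κ A B)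
         = (Monad.free T).map (T.μ.app A ⊗ₘ T.μ.app B) ≫ freeHom T (κ.κ A B),
      Nonempty (IsColimit (Cofork.ofπ (freeHom T (κ.κ A B)) w))) ∧
    -- (2) uniqueness of the induced morphism `T(f ⊗ g)`
    (∀ {A' B' : C} (f : A ⟶ A') (g : B ⟶ B'),
      (freeHom T (κ.κ A B) ≫ (Monad.free T).map (f ⊗ₘ g)
          = (Monad.free T).map (T.map f ⊗ₘ T.map g) ≫ freeHom T (κ.κ A' B')) ∧
      (∀ h : (Monad.free T).obj (A ⊗ B) ⟶ (Monad.free T).obj (A' ⊗ B'),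
        freeHom T (κ.κ A B) ≫ h
            = (Monad.free T).map (T.map f ⊗ₘ T.map g) ≫ freeHom T (κ.κ A' B') →
        h = (Monad.free T).map (f ⊗ₘ g))) ∧
    -- (3) consequently, any tensor product of the free algebras on `A` and `B`
    -- is isomorphic to the free algebra on `A ⊗ B`, identifying `q_{TA,TB}` with `μ·Tκ`
    (∀ {Q : Monad.Algebra T}
      (q : (Monad.free T).obj (T.obj A ⊗ T.obj B) ⟶ Q)
      (w : freeHom T (κ.κ (T.obj A) (T.obj B)) ≫ q
          = (Monad.free T).map (T.μ.app A ⊗ₘ T.μ.app B) ≫ q),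
      Nonempty (IsColimit (Cofork.ofπ q w)) →
      ∃ e : Q ≅ (Monad.free T).obj (A ⊗ B), q ≫ e.hom = freeHom T (κ.κ A B)) := by
  have hπ := κ.freeHomIsSplitCoequalizer A B
  refine ⟨⟨hπ.condition, ⟨hπ.isCoequalizer⟩⟩, fun f g => ?_, fun q w ⟨hq⟩ => ?_⟩
  · refine ⟨κ.freeHom_κ_comp_free_map f g, fun h hh => ?_⟩
    exact (cancel_epi (freeHom T (κ.κ A B))).1 (hh.trans (κ.freeHom_κ_comp_free_map f g).symm)
  · refine ⟨hq.coconePointUniqueUpToIso hπ.isCoequalizer, ?_⟩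
    exact hq.comp_coconePointUniqueUpToIso_hom hπ.isCoequalizer WalkingParallelPair.one
end

section
/- Let (T, κ) be a monoidal monad on a monoidal category C such that C^T has tensors and (C^T, ⊠, TE) is monoidal with induced structure. For a monoid M in (C^T, ⊠, TE), the morphisms τ_X = (e ⊠ 1_{TX}) · λ̄⁻¹_{TX} : TX → M ⊠ TX are the components of a monad morphism τ : T → M ⊠ T, where M ⊠ T is the monad on C with functor M ⊠ T(−), multiplication (m ⊠ 1)·ᾱ⁻¹·(1 ⊠ (ξ ⋈ μ)) and unit (e ⊠ 1)·λ̄⁻¹·η. -/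
/-!
A monoid `M` in `(C^T, ⊠, TE)` makes `M ⊠ -` a monad on `C^T`, whose algebras are the
`M`-modules. The monad `M ⊠ T` is the monad of the composite adjunction
`C ⇄ C^T ⇄ (C^T)^M`, so it satisfies the monad laws automatically. For any composite of
adjunctions `F ⊣ G` and `H ⊣ I`, whiskering the unit of `H ⊣ I` gives a monad morphism
`GF ⟶ GIHF`; for the two adjunctions at hand its components are `U(η^M_{TX}) = τ_X`.
-/

open CategoryTheory Category MonoidalCategory Limits

universe v u

variable {C : Type u} [Category.{v} C] [MonoidalCategory C]

/-- A monoidal monad is symmetric (with respect to a braiding `bc` on `C`). -/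
def MonoidalMonadStr.IsSymmetricWrt {T : Monad C} (κ : MonoidalMonadStr T)
    (bc : BraidedCategory C) : Prop :=
  ∀ X Y : C,
    (bc.braiding (T.obj X) (T.obj Y)).hom ≫ κ.κ Y X
      = κ.κ X Y ≫ T.map (bc.braiding X Y).hom

/-- A monoidal structure on `C^T` with tensor given by the coequalizers
`q_{A,B} : T(A⊗B) ⟶ A ⊠ B` and all structure morphisms *induced* by those of
`(C, ⊗, E)`; the unit is the free algebra `TE`. -/
structure InducedMonoidal (T : Monad C) (κ : MonoidalMonadStr T)
    (tens : Monad.Algebra T → Monad.Algebra T → Monad.Algebra T)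
    (q : ∀ A B : Monad.Algebra T, (Monad.free T).obj (A.A ⊗ B.A) ⟶ tens A B) :
    Type (max u v) where
  /-- functoriality of the tensor, induced by the universal property of `q` -/
  tmap : ∀ {A A' B B' : Monad.Algebra T}, (A ⟶ A') → (B ⟶ B') → (tens A B ⟶ tens A' B')
  tmap_q : ∀ {A A' B B' : Monad.Algebra T} (f : A ⟶ A') (g : B ⟶ B'),
      q A B ≫ tmap f g = (Monad.free T).map (f.f ⊗ₘ g.f) ≫ q A' B'
  tmap_id : ∀ A B : Monad.Algebra T, tmap (𝟙 A) (𝟙 B) = 𝟙 (tens A B)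
  tmap_comp : ∀ {A A' A'' B B' B'' : Monad.Algebra T}
      (f : A ⟶ A') (f' : A' ⟶ A'') (g : B ⟶ B') (g' : B' ⟶ B''),
      tmap (f ≫ f') (g ≫ g') = tmap f g ≫ tmap f' g'
  /-- the associator, induced by the associator of `C` -/
  assoc : ∀ A B Cc : Monad.Algebra T, tens (tens A B) Cc ≅ tens A (tens B Cc)
  assoc_induced : ∀ A B Cc : Monad.Algebra T,
      ((Monad.free T).map ((T.η.app (A.A ⊗ B.A) ≫ (q A B).f) ⊗ₘ 𝟙 Cc.A)
          ≫ q (tens A B) Cc) ≫ (assoc A B Cc).hom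
        = (Monad.free T).map (α_ A.A B.A Cc.A).hom ≫
            (Monad.free T).map (𝟙 A.A ⊗ₘ (T.η.app (B.A ⊗ Cc.A) ≫ (q B Cc).f))
              ≫ q A (tens B Cc)
  assoc_natural : ∀ {A A' B B' Cc Cc' : Monad.Algebra T}
      (f : A ⟶ A') (g : B ⟶ B') (h : Cc ⟶ Cc'),
      tmap (tmap f g) h ≫ (assoc A' B' Cc').hom = (assoc A B Cc).hom ≫ tmap f (tmap g h)
  pentagon : ∀ A B Cc D : Monad.Algebra T,
      tmap (assoc A B Cc).hom (𝟙 D) ≫ (assoc A (tens B Cc) D).hom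
          ≫ tmap (𝟙 A) (assoc B Cc D).hom
        = (assoc (tens A B) Cc D).hom ≫ (assoc A B (tens Cc D)).hom
  /-- the left unitor, induced by the bimorphism `a · Tλ · κ · (1 ⊗ η)` -/
  lunit : ∀ A : Monad.Algebra T, tens ((Monad.free T).obj (𝟙_ C)) A ≅ A
  lunit_induced : ∀ A : Monad.Algebra T,
      q ((Monad.free T).obj (𝟙_ C)) A ≫ (lunit A).hom
        = transHom T ((𝟙 (T.obj (𝟙_ C)) ⊗ₘ T.η.app A.A) ≫ κ.κ (𝟙_ C) A.A
            ≫ T.map (λ_ A.A).hom ≫ A.a)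
  lunit_natural : ∀ {A B : Monad.Algebra T} (f : A ⟶ B),
      tmap (𝟙 ((Monad.free T).obj (𝟙_ C))) f ≫ (lunit B).hom = (lunit A).hom ≫ f
  /-- the right unitor, induced by the bimorphism `a · Tρ · κ · (η ⊗ 1)` -/
  runit : ∀ A : Monad.Algebra T, tens A ((Monad.free T).obj (𝟙_ C)) ≅ A
  runit_induced : ∀ A : Monad.Algebra T,
      q A ((Monad.free T).obj (𝟙_ C)) ≫ (runit A).hom
        = transHom T ((T.η.app A.A ⊗ₘ 𝟙 (T.obj (𝟙_ C))) ≫ κ.κ A.A (𝟙_ C)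
            ≫ T.map (ρ_ A.A).hom ≫ A.a)
  runit_natural : ∀ {A B : Monad.Algebra T} (f : A ⟶ B),
      tmap f (𝟙 ((Monad.free T).obj (𝟙_ C))) ≫ (runit B).hom = (runit A).hom ≫ f
  triangle : ∀ A B : Monad.Algebra T,
      (assoc A ((Monad.free T).obj (𝟙_ C)) B).hom ≫ tmap (𝟙 A) (lunit B).hom
        = tmap (runit A).hom (𝟙 B)

/-- A symmetric extension of the induced monoidal structure on `C^T`, with
braiding induced by a braiding `bc` of `C`. -/
structure SymmetricInducedMonoidal (T : Monad C) (κ : MonoidalMonadStr T)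
    (bc : BraidedCategory C)
    (tens : Monad.Algebra T → Monad.Algebra T → Monad.Algebra T)
    (q : ∀ A B : Monad.Algebra T, (Monad.free T).obj (A.A ⊗ B.A) ⟶ tens A B)
    extends InducedMonoidal T κ tens q where
  braid : ∀ A B : Monad.Algebra T, tens A B ≅ tens B A
  braid_induced : ∀ A B : Monad.Algebra T,
      q A B ≫ (braid A B).hom
        = (Monad.free T).map (bc.braiding A.A B.A).hom ≫ q B A
  braid_natural : ∀ {A A' B B' : Monad.Algebra T} (f : A ⟶ A') (g : B ⟶ B'),
      tmap f g ≫ (braid A' B').hom = (braid A B).hom ≫ tmap g f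
  symmetry : ∀ A B : Monad.Algebra T, (braid A B).hom ≫ (braid B A).hom = 𝟙 (tens A B)
  hexagon : ∀ A B Cc : Monad.Algebra T,
      (assoc A B Cc).hom ≫ (braid A (tens B Cc)).hom ≫ (assoc B Cc A).hom
        = tmap (braid A B).hom (𝟙 Cc) ≫ (assoc B A Cc).hom ≫ tmap (𝟙 B) (braid A Cc).hom

/-- The structure map of an algebra, as a morphism of algebras from the free algebra
on its carrier. -/
def structHom (T : Monad C) (D : Monad.Algebra T) : (Monad.free T).obj D.A ⟶ D where
  f := D.a
  h := D.assoc.symm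

/-- The component `τ_X = (e ⊠ 1_{TX}) · λ̄⁻¹ : TX ⟶ M ⊠ TX` (as a morphism of `C`). -/
def tauHom (T : Monad C) {κ : MonoidalMonadStr T}
    {tens : Monad.Algebra T → Monad.Algebra T → Monad.Algebra T}
    {q : ∀ A B : Monad.Algebra T, (Monad.free T).obj (A.A ⊗ B.A) ⟶ tens A B}
    (MT : InducedMonoidal T κ tens q) (M : Monad.Algebra T)
    (ee : (Monad.free T).obj (𝟙_ C) ⟶ M) (X : C) :
    T.obj X ⟶ (tens M ((Monad.free T).obj X)).A :=
  ((MT.lunit ((Monad.free T).obj X)).inv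
    ≫ MT.tmap ee (𝟙 ((Monad.free T).obj X))).f

/-- The multiplication `(m ⊠ 1)·ᾱ⁻¹·(1 ⊠ (ξ ⋈ μ))` of the monad `M ⊠ T`
(as a morphism of `C`). -/
def muTilde (T : Monad C) {κ : MonoidalMonadStr T}
    {tens : Monad.Algebra T → Monad.Algebra T → Monad.Algebra T}
    {q : ∀ A B : Monad.Algebra T, (Monad.free T).obj (A.A ⊗ B.A) ⟶ tens A B}
    (MT : InducedMonoidal T κ tens q) (M : Monad.Algebra T)
    (mm : tens M M ⟶ M) (X : C) :
    (tens M ((Monad.free T).obj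
        ((tens M ((Monad.free T).obj X)).A))).A ⟶ (tens M ((Monad.free T).obj X)).A :=
  (MT.tmap (𝟙 M) (structHom T (tens M ((Monad.free T).obj X)))
    ≫ (MT.assoc M M ((Monad.free T).obj X)).inv
    ≫ MT.tmap mm (𝟙 ((Monad.free T).obj X))).f

namespace InducedMonoidal

variable {T : Monad C} {κ : MonoidalMonadStr T}
  {tens : Monad.Algebra T → Monad.Algebra T → Monad.Algebra T}
  {q : ∀ A B : Monad.Algebra T, (Monad.free T).obj (A.A ⊗ B.A) ⟶ tens A B}

abbrev toMonoidalCategory (MT : InducedMonoidal T κ tens q) :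
    MonoidalCategory (Monad.Algebra T) :=
  letI : MonoidalCategoryStruct (Monad.Algebra T) :=
    { tensorObj := tens
      whiskerLeft := fun A _ _ g => MT.tmap (𝟙 A) g
      whiskerRight := fun f B => MT.tmap f (𝟙 B)
      tensorHom := MT.tmap
      tensorUnit := (Monad.free T).obj (𝟙_ C)
      associator := MT.assoc
      leftUnitor := MT.lunit
      rightUnitor := MT.runit }
  MonoidalCategory.ofTensorHom (id_tensorHom_id := MT.tmap_id)
    (id_tensorHom := fun _ _ _ _ => rfl) (tensorHom_id := fun _ _ => rfl)
    (tensorHom_comp_tensorHom := fun f₁ f₂ g₁ g₂ => (MT.tmap_comp f₁ g₁ f₂ g₂).symm)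
    (associator_naturality := MT.assoc_natural)
    (leftUnitor_naturality := MT.lunit_natural)
    (rightUnitor_naturality := MT.runit_natural)
    (pentagon := MT.pentagon) (triangle := MT.triangle)

end InducedMonoidal

def CategoryTheory.MonObj.tensorLeftMonad {D : Type*} [Category D] [MonoidalCategory D]
    (M : D) [MonObj M] : Monad D where
  toFunctor := tensorLeft M
  η := { app X := (λ_ X).inv ≫ MonObj.one ▷ X
         naturality X Y f := by
           dsimp
           rw [leftUnitor_inv_naturality_assoc, whisker_exchange, Category.assoc] }
  μ := { app X := (α_ M M X).inv ≫ MonObj.mul ▷ X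
         naturality X Y f := by
           dsimp
           rw [associator_inv_naturality_right_assoc, whisker_exchange, Category.assoc] }
  assoc X := by
    dsimp
    rw [whiskerLeft_comp_assoc, associator_inv_naturality_middle_assoc, ← comp_whiskerRight,
      MonObj.mul_assoc_flip]
    monoidal
  left_unit X := by
    dsimp
    rw [Category.assoc, associator_inv_naturality_left_assoc, ← comp_whiskerRight, MonObj.one_mul]
    monoidal
  right_unit X := by
    dsimp
    rw [whiskerLeft_comp_assoc, associator_inv_naturality_middle_assoc, ← comp_whiskerRight,
      MonObj.mul_one]
    monoidal

namespace CategoryTheory.Adjunction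

variable {C' D E : Type*} [Category C'] [Category D] [Category E] {F : C' ⥤ D} {G : D ⥤ C'}
  {H : D ⥤ E} {I : E ⥤ D} (adj₁ : F ⊣ G) (adj₂ : H ⊣ I)

def toMonadHomComp : adj₁.toMonad ⟶ (adj₁.comp adj₂).toMonad where
  app X := G.map (adj₂.unit.app (F.obj X))
  naturality X Y f := by
    change G.map (F.map f) ≫ G.map (adj₂.unit.app (F.obj Y))
      = G.map (adj₂.unit.app (F.obj X)) ≫ G.map (I.map (H.map (F.map f)))
    dsimp only [Functor.id_obj, Functor.comp_obj]
    simp only [← G.map_comp, unit_naturality]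
  app_η X := by
    change adj₁.unit.app X ≫ G.map (adj₂.unit.app (F.obj X)) = (adj₁.comp adj₂).unit.app X
    rw [comp_unit_app]
  app_μ X := by
    change G.map (adj₁.counit.app (F.obj X)) ≫ G.map (adj₂.unit.app (F.obj X))
      = (G.map (F.map (G.map (adj₂.unit.app (F.obj X))))
          ≫ G.map (adj₂.unit.app (F.obj (G.obj (I.obj (H.obj (F.obj X)))))))
        ≫ G.map (I.map ((adj₁.comp adj₂).counit.app (H.obj (F.obj X))))
    rw [comp_counit_app]
    dsimp only [Functor.id_obj, Functor.comp_obj]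
    simp only [← G.map_comp, I.map_comp, Category.assoc, unit_naturality_assoc,
      right_triangle_components, comp_id, counit_naturality]

end CategoryTheory.Adjunction

theorem tau_is_monadHom_general
    (T : Monad C) (κ : MonoidalMonadStr T)
    (tens : Monad.Algebra T → Monad.Algebra T → Monad.Algebra T)
    (q : ∀ A B : Monad.Algebra T, (Monad.free T).obj (A.A ⊗ B.A) ⟶ tens A B)
    (MT : InducedMonoidal T κ tens q)
    -- a monoid `(M, m, e)` in `(C^T, ⊠, TE)`
    (M : Monad.Algebra T) (mm : tens M M ⟶ M) (ee : (Monad.free T).obj (𝟙_ C) ⟶ M)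
    (hassoc : MT.tmap mm (𝟙 M) ≫ mm = (MT.assoc M M M).hom ≫ MT.tmap (𝟙 M) mm ≫ mm)
    (hone : MT.tmap ee (𝟙 M) ≫ mm = (MT.lunit M).hom)
    (hone' : MT.tmap (𝟙 M) ee ≫ mm = (MT.runit M).hom) :
    ∃ (W : Monad C) (_ : ∀ X : C, W.obj X = (tens M ((Monad.free T).obj X)).A),
      (∀ {X Y : C} (f : X ⟶ Y),
        HEq (W.map f) ((MT.tmap (𝟙 M) ((Monad.free T).map f)).f)) ∧
      (∀ X : C, HEq (W.μ.app X) (muTilde T MT M mm X)) ∧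
      (∀ X : C, HEq (W.η.app X) (T.η.app X ≫ tauHom T MT M ee X)) ∧
      ∃ τ : T ⟶ W, ∀ X : C, HEq (τ.app X) (tauHom T MT M ee X) := by
  let _ := MT.toMonoidalCategory
  let _ : MonObj M := ⟨ee, mm, hone, hone', hassoc⟩
  let S := MonObj.tensorLeftMonad M
  refine ⟨(T.adj.comp S.adj).toMonad, fun _ => rfl, fun _ => HEq.rfl, fun X => heq_of_eq ?μ,
    fun X => heq_of_eq ?η, (Adjunction.adjToMonadIso T).inv ≫ T.adj.toMonadHomComp S.adj,
    fun X => heq_of_eq ?τ⟩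
  case μ =>
    simp only [Functor.comp_obj, Adjunction.toMonad_μ, Functor.whiskerRight_app, Functor.id_obj,
      Functor.whiskerLeft_app, Adjunction.comp_counit_app, Monad.adj_counit, Monad.free_obj_a,
      Functor.comp_map, Monad.forget_map]
    rfl
  case η =>
    simp only [Functor.id_obj, Adjunction.toMonad_η, Adjunction.comp_unit_app, Monad.adj_unit]
    rfl
  case τ =>
    simp only [Adjunction.toMonadHomComp, Functor.comp_obj, Monad.adj_unit,
      MonadHom.comp_toNatTrans, NatTrans.comp_app, Adjunction.adjToMonadIso_inv_toNatTrans_app]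
    exact id_comp (tauHom T MT M ee X)

/-- for a monoid `(M, m, e)` in the induced monoidal category
`(C^T, ⊠, TE)`, there is a monad `M ⊠ T` on `C` with functor `X ↦ M ⊠ TX`,
multiplication `(m ⊠ 1)·ᾱ⁻¹·(1 ⊠ (ξ ⋈ μ))` and unit `(e ⊠ 1)·λ̄⁻¹·η`, and the
morphisms `τ_X = (e ⊠ 1_{TX})·λ̄⁻¹ : TX ⟶ M ⊠ TX` are the components of a monad
morphism `τ : T ⟶ M ⊠ T`. -/
theorem tau_is_monadHom
    (T : Monad C) (κ : MonoidalMonadStr T)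
    (tens : Monad.Algebra T → Monad.Algebra T → Monad.Algebra T)
    (q : ∀ A B : Monad.Algebra T, (Monad.free T).obj (A.A ⊗ B.A) ⟶ tens A B)
    (w : ∀ A B : Monad.Algebra T,
        freeHom T (κ.κ A.A B.A) ≫ q A B = (Monad.free T).map (A.a ⊗ₘ B.a) ≫ q A B)
    (hq : ∀ A B : Monad.Algebra T, Nonempty (IsColimit (Cofork.ofπ (q A B) (w A B))))
    (MT : InducedMonoidal T κ tens q)
    -- a monoid `(M, m, e)` in `(C^T, ⊠, TE)`
    (M : Monad.Algebra T) (mm : tens M M ⟶ M) (ee : (Monad.free T).obj (𝟙_ C) ⟶ M)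
    (hassoc : MT.tmap mm (𝟙 M) ≫ mm = (MT.assoc M M M).hom ≫ MT.tmap (𝟙 M) mm ≫ mm)
    (hone : MT.tmap ee (𝟙 M) ≫ mm = (MT.lunit M).hom)
    (hone' : MT.tmap (𝟙 M) ee ≫ mm = (MT.runit M).hom) :
    ∃ (W : Monad C) (_ : ∀ X : C, W.obj X = (tens M ((Monad.free T).obj X)).A),
      (∀ {X Y : C} (f : X ⟶ Y),
        HEq (W.map f) ((MT.tmap (𝟙 M) ((Monad.free T).map f)).f)) ∧
      (∀ X : C, HEq (W.μ.app X) (muTilde T MT M mm X)) ∧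
      (∀ X : C, HEq (W.η.app X) (T.η.app X ≫ tauHom T MT M ee X)) ∧
      ∃ τ : T ⟶ W, ∀ X : C, HEq (τ.app X) (tauHom T MT M ee X) :=
  tau_is_monadHom_general T κ tens q MT M mm ee hassoc hone hone'
end
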